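/- arXiv:1503.02324 — 2 statements merged into one kernel-verified Lean document; each statement's English description precedes it below -/
import Mathlib

section
/- Let X be a normal projective variety, D a big ℝ-divisor, Γ a prime divisor, and set F := D − σ_Γ(D)·Γ. Then σ_Γ(F) = 0, σ_{Γ'}(F) = σ_{Γ'}(D) for every prime divisor Γ' ≠ Γ, and the natural inclusion H^0(X, mF) ⊆ H^0(X, mD) is an equality for every positive real number m. -/
/-- An abstract model of the divisor theory of a proper normal algebraic variety
over a field `k`.  `K` is the function field, `Prime` is the set of prime (Weil)
divisors, and `ord Γ f` is the order of vanishing of the rational function `f`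
along the prime divisor `Γ`. -/
structure NormalProperVariety (k : Type) [Field k] where
  /-- The function field `K(X)`. -/
  K : Type
  [fieldK : Field K]
  [algK : Algebra k K]
  /-- The set of prime (Weil) divisors on `X`. -/
  Prime : Type
  /-- `ord Γ f` is the order of vanishing of `f` along `Γ`. -/
  ord : Prime → K → ℤ
  ord_mul : ∀ (Γ : Prime) {f g : K}, f ≠ 0 → g ≠ 0 →
      ord Γ (f * g) = ord Γ f + ord Γ g
  ord_add : ∀ (Γ : Prime) {f g : K}, f ≠ 0 → g ≠ 0 → f + g ≠ 0 →
      min (ord Γ f) (ord Γ g) ≤ ord Γ (f + g)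
  ord_const : ∀ (Γ : Prime) (c : k), c ≠ 0 → ord Γ (algebraMap k K c) = 0
  finite_ord : ∀ {f : K}, f ≠ 0 → {Γ : Prime | ord Γ f ≠ 0}.Finite

attribute [instance] NormalProperVariety.fieldK NormalProperVariety.algK

namespace NormalProperVariety

variable {k : Type} [Field k] (X : NormalProperVariety k)

open Classical

/-- ℝ-divisors on `X`: finite formal `ℝ`-linear combinations of prime divisors. -/
abbrev Div : Type := X.Prime →₀ ℝ

/-- The divisor `div(f)` of a rational function (by convention `0` for `f = 0`). -/
noncomputable def divOf (f : X.K) : X.Div :=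
  if hf : f = 0 then 0
  else Finsupp.ofSupportFinite (fun Γ => (X.ord Γ f : ℝ))
    (Set.Finite.subset (X.finite_ord hf) (by
      intro Γ hΓ
      simp only [Function.mem_support, ne_eq, Int.cast_eq_zero] at hΓ
      exact hΓ))

/-- The set of principal divisors `div(f)`, `f ∈ K(X)*`. -/
def Principal : Set X.Div := {D | ∃ f : X.K, f ≠ 0 ∧ D = X.divOf f}

/-- `ℝ`-linear equivalence: `D - D' = Σ aᵢ div(fᵢ)` with `aᵢ ∈ ℝ`. -/
def REquiv (D D' : X.Div) : Prop := D - D' ∈ Submodule.span ℝ X.Principal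

/-- `ℚ`-linear equivalence: `D - D' = Σ aᵢ div(fᵢ)` with `aᵢ ∈ ℚ`. -/
def QEquiv (D D' : X.Div) : Prop := D - D' ∈ Submodule.span ℚ X.Principal

/-- `ℤ`-linear equivalence: `D - D' = div(f)`. -/
def ZEquiv (D D' : X.Div) : Prop := ∃ f : X.K, f ≠ 0 ∧ D - D' = X.divOf f

/-- `H⁰(X, 𝒪_X(D)) = H⁰(X, 𝒪_X(⌊D⌋))` as a subset of the function field, namely
`{f ∈ K(X)* : div(f) + D ≥ 0} ∪ {0}`.  (Since `ord` takes integer values,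
replacing `D` by its round-down `⌊D⌋` does not change this set.) -/
def H0 (D : X.Div) : Set X.K :=
  {f : X.K | f = 0 ∨ ∀ Γ : X.Prime, 0 ≤ (X.ord Γ f : ℝ) + D Γ}

/-- `h⁰(D) = dim_k H⁰(X, 𝒪_X(⌊D⌋))`. -/
noncomputable def h0 (D : X.Div) : ℕ := Set.finrank k (X.H0 D)

/-- The volume `vol(D) = limsup_{m → ∞} h⁰(mD) / (mⁿ / n!)`, where `n = dim X`. -/
noncomputable def vol (n : ℕ) (D : X.Div) : ℝ :=
  Filter.limsup (fun m : ℝ => (X.h0 (m • D) : ℝ) * (n.factorial : ℝ) / m ^ n)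
    Filter.atTop

/-- `D` is big iff `vol(D) > 0` (`n = dim X`). -/
def IsBig (n : ℕ) (D : X.Div) : Prop := 0 < X.vol n D

/-- Nakayama's `σ_Γ(D) = inf { mult_Γ D' : D' ∼_ℝ D, D' ≥ 0 }`. -/
noncomputable def sigma (D : X.Div) (Γ : X.Prime) : ℝ :=
  sInf {t : ℝ | ∃ D' : X.Div, X.REquiv D' D ∧ 0 ≤ D' ∧ t = D' Γ}

/-- The negative part `N_σ(D) = Σ_Γ σ_Γ(D) · Γ` of the divisorial Zariski
decomposition (by convention `0` in the degenerate case where infinitely many of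
the `σ_Γ(D)` are nonzero). -/
noncomputable def Nsigma (D : X.Div) : X.Div :=
  if h : (Function.support fun Γ => X.sigma D Γ).Finite then
    Finsupp.ofSupportFinite _ h
  else 0

/-- The positive part `P_σ(D) = D - N_σ(D)`. -/
noncomputable def Psigma (D : X.Div) : X.Div := D - X.Nsigma D

/-- A big ℝ-divisor is movable if `N_σ(D) = 0`. -/
def Movable (D : X.Div) : Prop := X.Nsigma D = 0

end NormalProperVariety


/-!
Every effective `E ∼_ℝ D` has `mult_Γ E ≥ σ_Γ(D) ≥ 0`, so `E ↦ E - σ_Γ(D) Γ` maps the ℝ-linear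
system `|D|_ℝ` bijectively onto `|F|_ℝ`; this lowers the infimum along `Γ` by exactly `σ_Γ(D)` and
leaves it unchanged along every other prime divisor. A nonzero `f ∈ H⁰(mD)` gives the effective
divisor `D + m⁻¹ div(f) ∼_ℝ D`, whose multiplicity along `Γ` is therefore at least `σ_Γ(D)`, and
that inequality says precisely that `f ∈ H⁰(mF)`.
-/

namespace NormalProperVariety

variable {k : Type} [Field k] (X : NormalProperVariety k)

theorem divOf_apply {f : X.K} (hf : f ≠ 0) (Γ : X.Prime) : X.divOf f Γ = X.ord Γ f := by
  rw [divOf, dif_neg hf]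
  rfl

/-- The ℝ-linear system `|D|_ℝ`. -/
def rLinearSystem (D : X.Div) : Set X.Div := {E | X.REquiv E D ∧ 0 ≤ E}

theorem sigma_eq_sInf_image (D : X.Div) (Γ : X.Prime) :
    X.sigma D Γ = sInf ((fun E => E Γ) '' X.rLinearSystem D) := by
  simp only [sigma, rLinearSystem, Set.image, Set.mem_ofPred_eq, and_assoc, eq_comm]

theorem bddBelow_image_rLinearSystem (D : X.Div) (Γ : X.Prime) :
    BddBelow ((fun E => E Γ) '' X.rLinearSystem D) :=
  ⟨0, by rintro _ ⟨E, hE, rfl⟩; exact hE.2 Γ⟩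

theorem sigma_nonneg (D : X.Div) (Γ : X.Prime) : 0 ≤ X.sigma D Γ := by
  rw [sigma_eq_sInf_image]
  exact Real.sInf_nonneg (by rintro _ ⟨E, hE, rfl⟩; exact hE.2 Γ)

theorem sigma_le_apply {D E : X.Div} (hE : E ∈ X.rLinearSystem D) (Γ : X.Prime) :
    X.sigma D Γ ≤ E Γ := by
  rw [sigma_eq_sInf_image]
  exact csInf_le (X.bddBelow_image_rLinearSystem D Γ) ⟨E, hE, rfl⟩

theorem sigma_of_rLinearSystem_eq_empty {D : X.Div} (h : X.rLinearSystem D = ∅)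
    (Γ : X.Prime) : X.sigma D Γ = 0 := by
  rw [sigma_eq_sInf_image, h, Set.image_empty, Real.sInf_empty]

theorem sigma_smul_single_nonneg (D : X.Div) (Γ : X.Prime) :
    0 ≤ X.sigma D Γ • Finsupp.single Γ (1 : ℝ) :=
  smul_nonneg (X.sigma_nonneg D Γ) (Finsupp.single_nonneg.mpr zero_le_one)

theorem sigma_smul_single_le {D E : X.Div} (hE : E ∈ X.rLinearSystem D) (Γ : X.Prime) :
    X.sigma D Γ • Finsupp.single Γ 1 ≤ E := by
  classical
  intro Γ'
  rw [Finsupp.smul_apply, Finsupp.single_apply]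
  split_ifs with h
  · subst h
    simpa using X.sigma_le_apply hE Γ
  · simpa using hE.2 Γ'

theorem rEquiv_sub_sub_iff {E D : X.Div} (G : X.Div) :
    X.REquiv (E - G) (D - G) ↔ X.REquiv E D := by
  rw [REquiv, REquiv, sub_sub_sub_cancel_right]

theorem rLinearSystem_sub {D G : X.Div} (hG : 0 ≤ G)
    (hGE : ∀ E ∈ X.rLinearSystem D, G ≤ E) :
    X.rLinearSystem (D - G) = (· - G) '' X.rLinearSystem D := by
  ext E
  constructor
  · rintro ⟨hED, hE⟩
    have hEG : E + G ∈ X.rLinearSystem D :=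
      ⟨by rwa [← X.rEquiv_sub_sub_iff G, add_sub_cancel_right],
        add_nonneg hE hG⟩
    exact ⟨E + G, hEG, add_sub_cancel_right E G⟩
  · rintro ⟨E, hE, rfl⟩
    exact ⟨(X.rEquiv_sub_sub_iff G).mpr hE.1, sub_nonneg.mpr (hGE E hE)⟩

theorem sigma_sub_of_forall_le {D G : X.Div} (hD : (X.rLinearSystem D).Nonempty)
    (hG : 0 ≤ G) (hGE : ∀ E ∈ X.rLinearSystem D, G ≤ E) (Γ : X.Prime) :
    X.sigma (D - G) Γ = X.sigma D Γ - G Γ := by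
  have himage : (fun E => E Γ) '' X.rLinearSystem (D - G)
      = OrderIso.subRight (G Γ) '' ((fun E => E Γ) '' X.rLinearSystem D) := by
    rw [X.rLinearSystem_sub hG hGE, Set.image_image, Set.image_image]
    rfl
  rw [sigma_eq_sInf_image, himage, sigma_eq_sInf_image,
    ← OrderIso.map_csInf' _ (hD.image _) (X.bddBelow_image_rLinearSystem D Γ)]
  rfl

theorem sigma_sub_sigma_smul_single (D : X.Div) (Γ Γ' : X.Prime) :
    X.sigma (D - X.sigma D Γ • Finsupp.single Γ 1) Γ'
      = X.sigma D Γ' - X.sigma D Γ * Finsupp.single Γ 1 Γ' := by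
  rcases (X.rLinearSystem D).eq_empty_or_nonempty with hempty | hD
  · -- `σ_Γ(D) = sInf ∅ = 0`, so the divisor is not changed at all
    simp [X.sigma_of_rLinearSystem_eq_empty hempty Γ]
  · exact X.sigma_sub_of_forall_le hD (X.sigma_smul_single_nonneg D Γ)
      (fun _ hE => X.sigma_smul_single_le hE Γ) Γ'

theorem mem_H0_iff {f : X.K} (hf : f ≠ 0) (D : X.Div) :
    f ∈ X.H0 D ↔ ∀ Γ, 0 ≤ (X.ord Γ f : ℝ) + D Γ := by
  simp [H0, hf]

theorem H0_mono {D D' : X.Div} (h : D ≤ D') : X.H0 D ⊆ X.H0 D' := by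
  rintro f (rfl | hf)
  · exact Or.inl rfl
  · exact Or.inr fun Γ => (hf Γ).trans ((add_le_add_iff_left _).mpr (h Γ))

theorem add_inv_smul_divOf_mem_rLinearSystem {D : X.Div} {m : ℝ} (hm : 0 < m) {f : X.K}
    (hf : f ≠ 0) (hfD : f ∈ X.H0 (m • D)) :
    D + m⁻¹ • X.divOf f ∈ X.rLinearSystem D := by
  refine ⟨?_, fun Γ => ?_⟩
  · rw [REquiv, add_sub_cancel_left]
    exact Submodule.smul_mem _ _ (Submodule.subset_span ⟨f, hf, rfl⟩)
  · have h := (X.mem_H0_iff hf _).mp hfD Γ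
    rw [Finsupp.smul_apply, smul_eq_mul] at h
    rw [Finsupp.add_apply, Finsupp.smul_apply, divOf_apply X hf, smul_eq_mul]
    have := mul_nonneg (inv_nonneg.mpr hm.le) h
    rw [mul_add, inv_mul_cancel_left₀ hm.ne'] at this
    simpa [add_comm] using this

theorem H0_smul_sub_eq {D G : X.Div} (hG : 0 ≤ G) (hGE : ∀ E ∈ X.rLinearSystem D, G ≤ E)
    {m : ℝ} (hm : 0 < m) : X.H0 (m • (D - G)) = X.H0 (m • D) := by
  refine (X.H0_mono (smul_le_smul_of_nonneg_left (sub_le_self D hG) hm.le)).antisymm ?_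
  intro f hfD
  by_cases hf : f = 0
  · exact Or.inl hf
  refine (X.mem_H0_iff hf _).mpr fun Γ => ?_
  have hGf := hGE _ (X.add_inv_smul_divOf_mem_rLinearSystem hm hf hfD) Γ
  rw [Finsupp.add_apply, Finsupp.smul_apply, divOf_apply X hf, smul_eq_mul] at hGf
  have := mul_le_mul_of_nonneg_left hGf hm.le
  rw [mul_add, mul_inv_cancel_left₀ hm.ne'] at this
  rw [Finsupp.smul_apply, Finsupp.sub_apply, smul_eq_mul]
  linarith

end NormalProperVariety

theorem sigma_sub_sigma_single_general {k : Type} [Field k]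
    (X : NormalProperVariety k) (D : X.Div)
    (Γ : X.Prime) :
    X.sigma (D - X.sigma D Γ • Finsupp.single Γ 1) Γ = 0 ∧
      (∀ Γ' : X.Prime, Γ' ≠ Γ →
        X.sigma (D - X.sigma D Γ • Finsupp.single Γ 1) Γ' = X.sigma D Γ') ∧
      (∀ m : ℝ, 0 < m →
        X.H0 (m • (D - X.sigma D Γ • Finsupp.single Γ 1)) = X.H0 (m • D)) := by
  refine ⟨?_, fun Γ' hΓ' => ?_, fun m hm => ?_⟩
  · rw [X.sigma_sub_sigma_smul_single]
    simp
  · rw [X.sigma_sub_sigma_smul_single, Finsupp.single_eq_of_ne hΓ', mul_zero, sub_zero]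
  · exact X.H0_smul_sub_eq (X.sigma_smul_single_nonneg D Γ)
      (fun _ hE => X.sigma_smul_single_le hE Γ) hm

/-- Let `D` be a big ℝ-divisor on a normal projective variety,
`Γ` a prime divisor and `F := D - σ_Γ(D)·Γ`.  Then `σ_Γ(F) = 0`,
`σ_{Γ'}(F) = σ_{Γ'}(D)` for every prime divisor `Γ' ≠ Γ`, and
`H⁰(X, mF) = H⁰(X, mD)` for every positive real `m`. -/
theorem sigma_sub_sigma_single {k : Type} [Field k]
    (X : NormalProperVariety k) (n : ℕ) (D : X.Div) (hD : X.IsBig n D)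
    (Γ : X.Prime) :
    X.sigma (D - X.sigma D Γ • Finsupp.single Γ 1) Γ = 0 ∧
      (∀ Γ' : X.Prime, Γ' ≠ Γ →
        X.sigma (D - X.sigma D Γ • Finsupp.single Γ 1) Γ' = X.sigma D Γ') ∧
      (∀ m : ℝ, 0 < m →
        X.H0 (m • (D - X.sigma D Γ • Finsupp.single Γ 1)) = X.H0 (m • D)) :=
  sigma_sub_sigma_single_general X D Γ
end

section
/- Let X be a normal proper variety and D a big ℝ-divisor. Then there are at most finitely many prime divisors Γ on X with σ_Γ(D) > 0. -/
/-! Bigness of `D` provides a nonzero section `f` of `mD` for some `m > 0`. Then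
`D + m⁻¹ div(f)` is an effective divisor `ℝ`-linearly equivalent to `D`, so `σ_Γ(D)` is
bounded by its multiplicity along `Γ`, which vanishes outside its finite support. -/

namespace NormalProperVariety

variable {k : Type} [Field k] (X : NormalProperVariety k)

theorem h0_eq_zero_of_forall_mem_H0 {D : X.Div} (h : ∀ f ∈ X.H0 D, f = 0) : X.h0 D = 0 := by
  rw [h0, Set.finrank, Submodule.span_eq_bot.mpr h]
  exact finrank_bot k X.K

theorem vol_eq_zero_of_eventually_h0_eq_zero (n : ℕ) {D : X.Div}
    (h : ∀ᶠ m : ℝ in Filter.atTop, X.h0 (m • D) = 0) : X.vol n D = 0 := by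
  have hzero : (fun m : ℝ => (X.h0 (m • D) : ℝ) * (n.factorial : ℝ) / m ^ n)
      =ᶠ[Filter.atTop] fun _ => 0 := by
    filter_upwards [h] with m hm
    simp [hm]
  rw [vol, Filter.limsup_congr hzero, Filter.limsup_const]

variable {X}

theorem IsBig.exists_ne_zero_mem_H0_smul {n : ℕ} {D : X.Div} (hD : X.IsBig n D) :
    ∃ m : ℝ, 0 < m ∧ ∃ f : X.K, f ≠ 0 ∧ f ∈ X.H0 (m • D) := by
  by_contra! hcon
  have hh0 : ∀ᶠ m : ℝ in Filter.atTop, X.h0 (m • D) = 0 := by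
    filter_upwards [Filter.eventually_gt_atTop 0] with m hm
    exact X.h0_eq_zero_of_forall_mem_H0 fun f hf => by_contra fun hne => hcon m hm f hne hf
  exact hD.ne' (X.vol_eq_zero_of_eventually_h0_eq_zero n hh0)

theorem REquiv_add_smul_divOf (D : X.Div) (c : ℝ) {f : X.K} (hf : f ≠ 0) :
    X.REquiv (D + c • X.divOf f) D := by
  rw [REquiv, add_sub_cancel_left]
  exact Submodule.smul_mem _ _ (Submodule.subset_span ⟨f, hf, rfl⟩)

theorem add_inv_smul_divOf_nonneg {D : X.Div} {m : ℝ} (hm : 0 < m) {f : X.K} (hf : f ≠ 0)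
    (hfD : f ∈ X.H0 (m • D)) : 0 ≤ D + m⁻¹ • X.divOf f := by
  have hord : ∀ Γ, 0 ≤ (X.ord Γ f : ℝ) + m * D Γ := hfD.resolve_left hf
  intro Γ
  have key : D Γ + m⁻¹ * X.ord Γ f = m⁻¹ * (X.ord Γ f + m * D Γ) := by
    field_simp
    ring
  simpa [divOf_apply X hf, key] using mul_nonneg (inv_nonneg.mpr hm.le) (hord Γ)

theorem IsBig.exists_nonneg_REquiv {n : ℕ} {D : X.Div} (hD : X.IsBig n D) :
    ∃ D' : X.Div, X.REquiv D' D ∧ 0 ≤ D' := by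
  obtain ⟨m, hm, f, hf, hfD⟩ := hD.exists_ne_zero_mem_H0_smul
  exact ⟨_, REquiv_add_smul_divOf D m⁻¹ hf, add_inv_smul_divOf_nonneg hm hf hfD⟩

theorem sigma_le_of_REquiv {D D' : X.Div} (hequiv : X.REquiv D' D) (hD' : 0 ≤ D')
    (Γ : X.Prime) : X.sigma D Γ ≤ D' Γ := by
  refine csInf_le ⟨0, ?_⟩ ⟨D', hequiv, hD', rfl⟩
  rintro t ⟨E, -, hE, rfl⟩
  exact hE Γ

end NormalProperVariety

/-- Let `X` be a normal proper variety and `D` a big ℝ-divisor.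
Then there are at most finitely many prime divisors `Γ` with `σ_Γ(D) > 0`. -/
theorem finite_sigma_pos {k : Type} [Field k] (X : NormalProperVariety k) (n : ℕ)
    (D : X.Div) (hD : X.IsBig n D) :
    {Γ : X.Prime | 0 < X.sigma D Γ}.Finite := by
  obtain ⟨D', hequiv, hD'⟩ := hD.exists_nonneg_REquiv
  refine D'.support.finite_toSet.subset fun Γ hΓ => ?_
  rw [Finset.mem_coe, Finsupp.mem_support_iff]
  exact (hΓ.trans_le (X.sigma_le_of_REquiv hequiv hD' Γ)).ne'
end
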